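/- arXiv:1311.3646 — 3 statements merged into one kernel-verified Lean document; each statement's English description precedes it below -/
import Mathlib

section
/- Let N > 1 and K > 0 be real numbers, let 0 ≤ p ≤ 1, let α > 1, and set β := 1/α and p̃ := p/(1 − p/N). Suppose that real numbers x̄ and σ² with σ² ≥ 0 satisfy the quadratic equation K·β·x̄² − (p̃ + K·(1+β))·x̄ + K·(1 + β·σ²) = 0. Then K·(1 − x̄) ≤ 1/((1 − 1/N)·(1 − 1/α)). -/
/-! The quadratic factors as `K (1 - x̄)(1 - β x̄) + K β σ² = p̃ x̄`.
For `x̄ < 1` this gives `K (1 - x̄)(1 - β) ≤ K (1 - x̄)(1 - β x̄) ≤ p̃ x̄ ≤ p̃`,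
and `p̃ = p/(1 - p/N)` is increasing in `p`, so `p̃ ≤ 1/(1 - 1/N)`;
for `x̄ ≥ 1` the bound is trivial. -/

theorem div_one_sub_div_le_div_one_sub_div {N p q : ℝ} (hN : 0 < N) (hpq : p ≤ q)
    (hqN : q < N) :
    p / (1 - p / N) ≤ q / (1 - q / N) := by
  have hq : 0 < 1 - q / N := by rw [sub_pos, div_lt_one hN]; exact hqN
  have hp : 0 < 1 - p / N := by rw [sub_pos, div_lt_one hN]; linarith
  rw [div_le_div_iff₀ hp hq]
  have : q * (1 - p / N) - p * (1 - q / N) = q - p := by ring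
  linarith

theorem mul_one_sub_mul_one_sub_le_of_quadratic_eq_zero {K β c x s : ℝ} (hK : 0 ≤ K)
    (hβ0 : 0 ≤ β) (hβ1 : β < 1) (hc : 0 ≤ c) (hs : 0 ≤ s)
    (hquad : K * β * x ^ 2 - (c + K * (1 + β)) * x + K * (1 + β * s) = 0) :
    K * (1 - x) * (1 - β) ≤ c := by
  have hfactor : K * (1 - x) * (1 - β * x) + K * β * s = c * x := by
    linear_combination hquad
  have hKβs : 0 ≤ K * β * s := by positivity
  rcases le_or_gt 1 x with hx1 | hx1
  · have : K * (1 - x) ≤ 0 := mul_nonpos_of_nonneg_of_nonpos hK (by linarith)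
    exact (mul_nonpos_of_nonpos_of_nonneg this (by linarith)).trans hc
  have hKx : 0 ≤ K * (1 - x) := mul_nonneg hK (by linarith)
  calc K * (1 - x) * (1 - β) ≤ K * (1 - x) * (1 - β * x) := by
        gcongr; exact mul_le_of_le_one_right hβ0 hx1.le
    _ ≤ c * x := by linarith
    _ ≤ c := mul_le_of_le_one_right hc hx1.le

/-- Lemma 2 core: the steady-state quadratic equation implies the bound
`K·(1 − x̄) ≤ 1/((1 − 1/N)·(1 − 1/α))`. -/
theorem stmt_0 (N K p α xbar σ2 : ℝ)
    (hN : 1 < N) (hK : 0 < K) (hp0 : 0 ≤ p) (hp1 : p ≤ 1) (hα : 1 < α)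
    (hσ2 : 0 ≤ σ2)
    (hquad : K * (1/α) * xbar ^ 2
        - (p / (1 - p / N) + K * (1 + 1/α)) * xbar
        + K * (1 + (1/α) * σ2) = 0) :
    K * (1 - xbar) ≤ 1 / ((1 - 1/N) * (1 - 1/α)) := by
  have hN0 : 0 < N := by linarith
  have hβ1 : 1 / α < 1 := by rw [div_lt_one (by linarith)]; exact hα
  have hp_tilde : 0 ≤ p / (1 - p / N) := by
    simpa using div_one_sub_div_le_div_one_sub_div hN0 hp0 (by linarith)
  have hbound : K * (1 - xbar) * (1 - 1 / α) ≤ 1 / (1 - 1 / N) :=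
    (mul_one_sub_mul_one_sub_le_of_quadratic_eq_zero hK.le (by positivity) hβ1 hp_tilde hσ2
      hquad).trans (div_one_sub_div_le_div_one_sub_div hN0 hp1 hN)
  calc K * (1 - xbar) ≤ 1 / (1 - 1 / N) / (1 - 1 / α) := (le_div_iff₀ (by linarith)).2 hbound
    _ = 1 / ((1 - 1 / N) * (1 - 1 / α)) := div_div _ _ _
end

section
/- Let K > 0, 0 ≤ β < 1, p̃ ≥ 0, and σ² ≥ 0 be real numbers, and set a := β·K, b := −(p̃ + (1+β)·K), c := (1 + β·σ²)·K. If x̄ is any real solution of a·x̄² + b·x̄ + c = 0 and β > 0, then x̄ ≥ (p̃ + 2·K·β − p̃·(1+β)/(1−β)) / (2·β·K). -/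
/-!
Write `f` for the quadratic and `t = p̃ / ((1 - β) K)`. Substituting `p̃ = t (1 - β) K` gives
`f (1 - t) = K (t² + β σ²) ≥ 0`, and `1 - t ≤ 1 ≤ (1 + β) / (2β)` lies left of the vertex of the
convex parabola `f`, so `f > 0` left of `1 - t`. Hence every root is at least `1 - t`.
-/

theorem le_of_quadratic_eq_zero {a b c s x : ℝ} (ha : 0 < a) (hs : 2 * a * s + b ≤ 0)
    (hfs : 0 ≤ a * s ^ 2 + b * s + c) (hx : a * x ^ 2 + b * x + c = 0) : s ≤ x := by
  by_contra! hxs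
  have hdiff : a * x ^ 2 + b * x + c - (a * s ^ 2 + b * s + c) = (s - x) * (-(a * (x + s) + b)) := by
    ring
  have hpos : 0 < (s - x) * (-(a * (x + s) + b)) := mul_pos (by linarith) (by nlinarith)
  linarith

theorem quadratic_eval_one_sub (K β p σ2 : ℝ) (hK : K ≠ 0) (hβ : β ≠ 1) :
    let t := p / ((1 - β) * K)
    (β * K) * (1 - t) ^ 2 + (-(p + (1 + β) * K)) * (1 - t) + (1 + β * σ2) * K
      = K * (t ^ 2 + β * σ2) := by
  intro t
  have hp : p = t * ((1 - β) * K) := by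
    rw [div_mul_cancel₀ _ (mul_ne_zero (sub_ne_zero.2 hβ.symm) hK)]
  rw [hp]
  ring

theorem stmt_1_general (K β ptilde σ2 xbar : ℝ)
    (hK : 0 < K) (hβ1 : β < 1) (hp : 0 ≤ ptilde) (hσ2 : 0 ≤ σ2)
    (hβpos : 0 < β)
    (hroot : (β * K) * xbar ^ 2 + (-(ptilde + (1 + β) * K)) * xbar
        + ((1 + β * σ2) * K) = 0) :
    xbar ≥ (ptilde + 2 * K * β - ptilde * (1 + β) / (1 - β)) / (2 * β * K) := by
  set t := ptilde / ((1 - β) * K) with ht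
  have hβ1' : 0 < 1 - β := by linarith
  have ht0 : 0 ≤ t := by positivity
  have hbound : (ptilde + 2 * K * β - ptilde * (1 + β) / (1 - β)) / (2 * β * K) = 1 - t := by
    rw [ht]
    field_simp
    ring
  rw [hbound, ge_iff_le]
  refine le_of_quadratic_eq_zero (mul_pos hβpos hK) ?_ ?_ hroot
  · nlinarith [mul_nonneg (mul_pos hβpos hK).le ht0]
  · rw [quadratic_eval_one_sub K β ptilde σ2 hK.ne' hβ1.ne]
    positivity

/-- Appendix A: any real root of the quadratic `a·x̄² + b·x̄ + c = 0` with
`a = β·K`, `b = −(p̃ + (1+β)·K)`, `c = (1 + β·σ²)·K` satisfies the stated lower bound. -/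
theorem stmt_1 (K β ptilde σ2 xbar : ℝ)
    (hK : 0 < K) (hβ0 : 0 ≤ β) (hβ1 : β < 1) (hp : 0 ≤ ptilde) (hσ2 : 0 ≤ σ2)
    (hβpos : 0 < β)
    (hroot : (β * K) * xbar ^ 2 + (-(ptilde + (1 + β) * K)) * xbar
        + ((1 + β * σ2) * K) = 0) :
    xbar ≥ (ptilde + 2 * K * β - ptilde * (1 + β) / (1 - β)) / (2 * β * K) :=
  stmt_1_general K β ptilde σ2 xbar hK hβ1 hp hσ2 hβpos hroot
end

section
/- Let M and N be real numbers with 0 < M ≤ N, let K be a positive integer, and let α be a real number with 1 ≤ α < 2. Define R(M, N, K) := (N/M − 1)·(1 − (1 − M/N)^K). Then R(M, α·N, K) ≤ 2·R(M, N, K) + (α − 1)/(1 − α/2). -/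
/-! Put `x = M / N ∈ (0, 1]` and `t = 1 - (1 - x) ^ K ∈ [0, 1]`. Enlarging the library from `N`
to `α N` can only shrink the factor `t`, so `R(M, α N, K) ≤ (α / x - 1) t`. For `α ≤ 2` and
`x ≤ 1` we have `α / x - 1 ≤ 2 (1 / x - 1) + (α - 1)`, which gives `2 R(M, N, K) + (α - 1) t`,
and finally `(α - 1) t ≤ α - 1 ≤ (α - 1) / (1 - α / 2)`. -/

/-- Peak rate of the decentralized coded caching scheme. -/
noncomputable def R (M N : ℝ) (K : ℕ) : ℝ := (N / M - 1) * (1 - (1 - M / N) ^ K)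

section OneSubPow

variable {x : ℝ} (K : ℕ)

lemma one_sub_one_sub_pow_nonneg (hx₀ : 0 ≤ x) (hx₁ : x ≤ 1) : 0 ≤ 1 - (1 - x) ^ K :=
  sub_nonneg.mpr (pow_le_one₀ (by linarith) (by linarith))

lemma one_sub_one_sub_pow_le_one (hx₁ : x ≤ 1) : 1 - (1 - x) ^ K ≤ 1 :=
  sub_le_self _ (pow_nonneg (by linarith) K)

end OneSubPow

lemma R_le_of_le {M N N' : ℝ} (K : ℕ) (hM : 0 < M) (hMN : M ≤ N) (hNN' : N ≤ N') :
    R M N' K ≤ (N' / M - 1) * (1 - (1 - M / N) ^ K) := by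
  have hN : 0 < N := hM.trans_le hMN
  have hN'M : 0 ≤ N' / M - 1 := sub_nonneg.mpr ((one_le_div hM).mpr (hMN.trans hNN'))
  have hfrac : M / N' ≤ M / N := div_le_div_of_nonneg_left hM.le hN hNN'
  have hbase : 0 ≤ 1 - M / N := sub_nonneg.mpr ((div_le_one hN).mpr hMN)
  unfold R
  gcongr

lemma scale_sub_one_le {y α : ℝ} (hy : 1 ≤ y) (hα : α ≤ 2) :
    α * y - 1 ≤ 2 * (y - 1) + (α - 1) := by
  nlinarith

lemma sub_one_le_sub_one_div {α : ℝ} (hα₁ : 1 ≤ α) (hα₂ : α < 2) :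
    α - 1 ≤ (α - 1) / (1 - α / 2) :=
  le_div_self (by linarith) (by linarith) (by linarith)

theorem stmt_4_general (M N α : ℝ) (K : ℕ)
    (hM : 0 < M) (hMN : M ≤ N) (hα1 : 1 ≤ α) (hα2 : α < 2) :
    R M (α * N) K ≤ 2 * R M N K + (α - 1) / (1 - α / 2) := by
  have hN : 0 < N := hM.trans_le hMN
  have hx₀ : 0 ≤ M / N := (div_pos hM hN).le
  have hx₁ : M / N ≤ 1 := (div_le_one hN).mpr hMN
  have ht₀ := one_sub_one_sub_pow_nonneg K hx₀ hx₁
  have ht₁ := one_sub_one_sub_pow_le_one K hx₁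
  have hNαN : N ≤ α * N := le_mul_of_one_le_left hN.le hα1
  have hscale : α * N / M - 1 ≤ 2 * (N / M - 1) + (α - 1) := by
    rw [mul_div_assoc]
    exact scale_sub_one_le ((one_le_div hM).mpr hMN) hα2.le
  calc R M (α * N) K ≤ (α * N / M - 1) * (1 - (1 - M / N) ^ K) := R_le_of_le K hM hMN hNαN
    _ ≤ (2 * (N / M - 1) + (α - 1)) * (1 - (1 - M / N) ^ K) := by gcongr
    _ = 2 * R M N K + (α - 1) * (1 - (1 - M / N) ^ K) := by rw [R]; ring
    _ ≤ 2 * R M N K + (α - 1) := by gcongr; exact mul_le_of_le_one_right (by linarith) ht₁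
    _ ≤ 2 * R M N K + (α - 1) / (1 - α / 2) := by gcongr; exact sub_one_le_sub_one_div hα1 hα2

/-- Appendix B: `R(M, α·N, K) ≤ 2·R(M, N, K) + (α − 1)/(1 − α/2)`. -/
theorem stmt_4 (M N α : ℝ) (K : ℕ)
    (hM : 0 < M) (hMN : M ≤ N) (hK : 0 < K) (hα1 : 1 ≤ α) (hα2 : α < 2) :
    R M (α * N) K ≤ 2 * R M N K + (α - 1) / (1 - α / 2) :=
  stmt_4_general M N α K hM hMN hα1 hα2
end
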